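/- arXiv:1108.5030 — 4 statements merged into one kernel-verified Lean document; each statement's English description precedes it below -/
import Mathlib

section
/- Let (G,P) be a quasi-lattice ordered group and suppose F ⊆ P \ {e} is a finite set with FP = P \ {e} (a FESSPE). For x ∈ P, let 1_x : P → ℂ denote the characteristic function of the set {t ∈ P : x ≤ t} = xP. Then for every x ∈ P, the pointwise product ∏_{a ∈ F} (1_x − 1_{xa}) equals the characteristic function of the singleton {x}. -/
open Classical

/-! Write `s ≤ t` for `s⁻¹ * t ∈ P`. Since `x * a ≤ t` forces `x ≤ t`, the factor of `a ∈ F` is the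
indicator of `x ≤ t ∧ ¬ x * a ≤ t`, so the product is the indicator of
`∀ a ∈ F, x ≤ t ∧ ¬ x * a ≤ t`. This holds at `t = x` because `x * a ≤ x` would make `a⁻¹`
positive, and fails for `t ≠ x`: if `x ≤ t` then `x⁻¹ * t ∈ P \ {1} = F * P` yields some `a ∈ F`
with `x * a ≤ t`, and otherwise it suffices that `F` is nonempty, which holds as `P ≠ {1}`. -/

theorem ite_one_zero_sub_ite_one_zero_of_imp {R : Type*} [Ring R] {p q : Prop} [Decidable p]
    [Decidable q] (h : q → p) :
    ((if p then 1 else 0) - (if q then 1 else 0) : R) = if p ∧ ¬q then 1 else 0 := by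
  by_cases hq : q <;> simp [hq, h]

section QuasiLatticeOrder

variable {G : Type*} [Group G] {P : Set G}

theorem inv_mul_mem_of_mul_inv_mul_mem (hmul : ∀ a ∈ P, ∀ b ∈ P, a * b ∈ P) {x a t : G}
    (ha : a ∈ P) (h : (x * a)⁻¹ * t ∈ P) : x⁻¹ * t ∈ P := by
  have hxt : x⁻¹ * t = a * ((x * a)⁻¹ * t) := by group
  exact hxt ▸ hmul a ha _ h

theorem mul_inv_mul_self_notMem (hpos : ∀ a ∈ P, a⁻¹ ∈ P → a = 1) {a : G} (ha : a ∈ P)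
    (ha1 : a ≠ 1) (x : G) : (x * a)⁻¹ * x ∉ P := by
  have hax : (x * a)⁻¹ * x = a⁻¹ := by group
  exact hax ▸ fun h ↦ ha1 (hpos a ha h)

theorem exists_mem_le_of_mem_diff_one {F : Finset G}
    (hFP : {w : G | ∃ a ∈ F, ∃ p ∈ P, w = a * p} = P \ {1})
    {w : G} (hw : w ∈ P) (hw1 : w ≠ 1) : ∃ a ∈ F, a⁻¹ * w ∈ P := by
  obtain ⟨a, haF, p, hp, rfl⟩ : w ∈ {w : G | ∃ a ∈ F, ∃ p ∈ P, w = a * p} := hFP ▸ ⟨hw, hw1⟩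
  exact ⟨a, haF, by simpa using hp⟩

theorem forall_le_and_not_mul_le_iff_eq (hone : (1 : G) ∈ P) (hpos : ∀ a ∈ P, a⁻¹ ∈ P → a = 1)
    {F : Finset G} (hF : ↑F ⊆ P \ {1})
    (hFP : {w : G | ∃ a ∈ F, ∃ p ∈ P, w = a * p} = P \ {1}) {x t : G} (hx : x ∈ P) (ht : t ∈ P) :
    (∀ a ∈ F, x⁻¹ * t ∈ P ∧ (x * a)⁻¹ * t ∉ P) ↔ t = x := by
  refine ⟨fun h ↦ ?_, ?_⟩
  · by_contra htx
    by_cases hxt : x⁻¹ * t ∈ P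
    · have hxt1 : x⁻¹ * t ≠ 1 := fun h1 ↦ htx (inv_mul_eq_one.mp h1).symm
      obtain ⟨a, haF, hat⟩ := exists_mem_le_of_mem_diff_one hFP hxt hxt1
      exact (h a haF).2 (by simpa [mul_assoc] using hat)
    · obtain ⟨w, hw, hw1⟩ : ∃ w ∈ P, w ≠ 1 := by
        by_cases ht1 : t = 1
        · exact ⟨x, hx, fun hx1 ↦ htx (ht1.trans hx1.symm)⟩
        · exact ⟨t, ht, ht1⟩
      obtain ⟨a, haF, -⟩ := exists_mem_le_of_mem_diff_one hFP hw hw1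
      exact hxt (h a haF).1
  · rintro rfl a haF
    exact ⟨by simpa using hone, mul_inv_mul_self_notMem hpos (hF haF).1 (hF haF).2 t⟩

end QuasiLatticeOrder

theorem stmt1_general {G : Type*} [Group G] (P : Set G)
    (hone : (1 : G) ∈ P)
    (hmul : ∀ a ∈ P, ∀ b ∈ P, a * b ∈ P)
    (hpos : ∀ a ∈ P, a⁻¹ ∈ P → a = 1)
    (F : Finset G) (hF : ↑F ⊆ P \ {1})
    (hFP : {w : G | ∃ a ∈ F, ∃ p ∈ P, w = a * p} = P \ {1}) :
    ∀ x ∈ P, ∀ t : P,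
      (∏ a ∈ F, ((if x⁻¹ * (t : G) ∈ P then (1 : ℂ) else 0) -
          (if (x * a)⁻¹ * (t : G) ∈ P then (1 : ℂ) else 0)))
        = if (t : G) = x then (1 : ℂ) else 0 := by
  intro x hx t
  rw [Finset.prod_congr rfl fun a ha ↦ ite_one_zero_sub_ite_one_zero_of_imp
      (inv_mul_mem_of_mul_inv_mul_mem hmul (hF ha).1), Finset.prod_boole]
  exact if_congr (forall_le_and_not_mul_le_iff_eq hone hpos hF hFP hx t.2) rfl rfl

/-- If `F` is a FESSPE for the quasi-lattice ordered group `(G, P)`, then for every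
`x ∈ P` the pointwise product `∏_{a ∈ F} (1_x − 1_{xa})` of functions on `P`
equals the characteristic function of the singleton `{x}`.
Here `1_s : P → ℂ` is the indicator of `{t ∈ P : s ≤ t}`, i.e. of `s⁻¹ * t ∈ P`. -/
theorem stmt1 {G : Type*} [Group G] (P : Set G)
    (hone : (1 : G) ∈ P)
    (hmul : ∀ a ∈ P, ∀ b ∈ P, a * b ∈ P)
    (hpos : ∀ a ∈ P, a⁻¹ ∈ P → a = 1)
    (hql : ∀ x y : G, (∃ u ∈ P, x⁻¹ * u ∈ P ∧ y⁻¹ * u ∈ P) →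
      ∃ v ∈ P, x⁻¹ * v ∈ P ∧ y⁻¹ * v ∈ P ∧
        ∀ u ∈ P, x⁻¹ * u ∈ P → y⁻¹ * u ∈ P → v⁻¹ * u ∈ P)
    (F : Finset G) (hF : ↑F ⊆ P \ {1})
    (hFP : {w : G | ∃ a ∈ F, ∃ p ∈ P, w = a * p} = P \ {1}) :
    ∀ x ∈ P, ∀ t : P,
      (∏ a ∈ F, ((if x⁻¹ * (t : G) ∈ P then (1 : ℂ) else 0) -
          (if (x * a)⁻¹ * (t : G) ∈ P then (1 : ℂ) else 0)))
        = if (t : G) = x then (1 : ℂ) else 0 :=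
  stmt1_general P hone hmul hpos F hF hFP
end

section
/- Let (G,P) be a quasi-lattice ordered group admitting a FESSPE (a finite set F ⊆ P \ {e} with FP = P \ {e}). Then every singleton characteristic function 1_{{x}} for x ∈ P lies in the closed linear span B_P = span{1_s : s ∈ P} inside ℓ∞(P); consequently c₀(P) ⊆ B_P. -/
/-!
Write `U s = {t ∈ P : s ≤ t}`. In a quasi-lattice ordered group two such up-sets meet in a
third one or not at all, so the span of their indicators is closed under products, and the
inclusion–exclusion identity `1_{U ∪ V} = 1_U + 1_V - 1_U 1_V` puts the indicator of every
finite union of up-sets into it. A FESSPE `F` gives `{x} = U x \ ⋃_{a ∈ F} U (x a)`, hence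
`1_{x} = 1_{U x} - 1_{⋃ U (x a)}`, and finitely supported functions are combinations of these.
-/

open Classical

open Submodule Pointwise in
theorem mul_mem_span_of_mul_mem {R A : Type*} [CommSemiring R] [Semiring A] [Algebra R A]
    {S : Set A} (hS : ∀ a ∈ S, ∀ b ∈ S, a * b ∈ span R S) {a b : A} (ha : a ∈ span R S)
    (hb : b ∈ span R S) : a * b ∈ span R S := by
  have : span R S * span R S ≤ span R S := by
    rw [span_mul_span, span_le]
    exact Set.mul_subset_iff.mpr hS
  exact this (mul_mem_mul ha hb)

section IndicatorSpan

variable {X R : Type*} [CommRing R] {𝒰 : Set (Set X)}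

open Submodule

theorem indicator_one_mul_mem_span
    (h𝒰 : ∀ U ∈ 𝒰, ∀ V ∈ 𝒰, (U ∩ V).Nonempty → U ∩ V ∈ 𝒰) {f g : X → R}
    (hf : f ∈ span R ((·.indicator 1) '' 𝒰)) (hg : g ∈ span R ((·.indicator 1) '' 𝒰)) :
    f * g ∈ span R ((·.indicator 1) '' 𝒰) := by
  refine mul_mem_span_of_mul_mem ?_ hf hg
  rintro _ ⟨U, hU, rfl⟩ _ ⟨V, hV, rfl⟩
  rw [← Set.inter_indicator_one]
  rcases (U ∩ V).eq_empty_or_nonempty with hUV | hUV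
  · rw [hUV, Set.indicator_empty']
    exact zero_mem _
  · exact subset_span ⟨_, h𝒰 U hU V hV hUV, rfl⟩

theorem indicator_one_biUnion_mem_span
    (h𝒰 : ∀ U ∈ 𝒰, ∀ V ∈ 𝒰, (U ∩ V).Nonempty → U ∩ V ∈ 𝒰) {ι : Type*} (s : Finset ι)
    {U : ι → Set X} (hU : ∀ i ∈ s, U i ∈ 𝒰) :
    (⋃ i ∈ s, U i).indicator (1 : X → R) ∈ span R ((·.indicator 1) '' 𝒰) := by
  induction s using Finset.induction_on with
  | empty =>
    simp only [Finset.notMem_empty, Set.iUnion_of_empty, Set.iUnion_empty, Set.indicator_empty']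
    exact zero_mem _
  | insert i s hi ih =>
    have hUi : (U i).indicator (1 : X → R) ∈ span R ((·.indicator 1) '' 𝒰) :=
      subset_span ⟨U i, hU i (s.mem_insert_self i), rfl⟩
    have hW := ih fun j hj ↦ hU j (Finset.mem_insert_of_mem hj)
    rw [Finset.set_biUnion_insert,
      eq_sub_of_add_eq (Set.indicator_union_add_inter (1 : X → R) _ _), Set.inter_indicator_one]
    exact sub_mem (add_mem hUi hW) (indicator_one_mul_mem_span h𝒰 hUi hW)

end IndicatorSpan

theorem Submodule.mem_of_support_finite {X R : Type*} [Semiring R] {M : Submodule R (X → R)}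
    (hM : ∀ x, ({x} : Set X).indicator 1 ∈ M) {g : X → R} (hg : g.support.Finite) : g ∈ M := by
  have : g = ∑ x ∈ hg.toFinset, g x • ({x} : Set X).indicator 1 := by
    ext y
    simp only [Finset.sum_apply, Pi.smul_apply, Set.indicator_apply, Set.mem_singleton_iff,
      Pi.one_apply, smul_eq_mul, mul_ite, mul_one, mul_zero, Finset.sum_ite_eq]
    split_ifs with hy
    · rfl
    · simpa using hy
  rw [this]
  exact Submodule.sum_mem _ fun x _ ↦ Submodule.smul_mem _ _ (hM x)

section QuasiLattice

variable {G : Type*} [Group G] (P : Set G)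

def principalUpSet (s : G) : Set P := {t | s⁻¹ * (t : G) ∈ P}

def HasLeastCommonUpperBounds : Prop :=
  ∀ x y : G, (∃ u ∈ P, x⁻¹ * u ∈ P ∧ y⁻¹ * u ∈ P) →
    ∃ v ∈ P, x⁻¹ * v ∈ P ∧ y⁻¹ * v ∈ P ∧ ∀ u ∈ P, x⁻¹ * u ∈ P → y⁻¹ * u ∈ P → v⁻¹ * u ∈ P

variable {P}

@[simp]
theorem mem_principalUpSet {s : G} {t : P} : t ∈ principalUpSet P s ↔ s⁻¹ * (t : G) ∈ P :=
  Iff.rfl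

theorem principalUpSet_inter_mem_image (hmul : ∀ a ∈ P, ∀ b ∈ P, a * b ∈ P)
    (hql : HasLeastCommonUpperBounds P) {x y : G}
    (hxy : (principalUpSet P x ∩ principalUpSet P y).Nonempty) :
    principalUpSet P x ∩ principalUpSet P y ∈ principalUpSet P '' P := by
  obtain ⟨t, hxt, hyt⟩ := hxy
  obtain ⟨v, hv, hxv, hyv, hmin⟩ := hql x y ⟨t, t.2, hxt, hyt⟩
  refine ⟨v, hv, Set.ext fun u ↦ ⟨fun hvu ↦ ⟨?_, ?_⟩, fun hu ↦ hmin u u.2 hu.1 hu.2⟩⟩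
  · simpa [mul_assoc] using hmul _ hxv _ hvu
  · simpa [mul_assoc] using hmul _ hyv _ hvu

theorem principalUpSet_mul_subset (hmul : ∀ a ∈ P, ∀ b ∈ P, a * b ∈ P) (x : G) {a : G}
    (ha : a ∈ P) : principalUpSet P (x * a) ⊆ principalUpSet P x := fun t ht ↦ by
  simpa [mul_assoc] using hmul _ ha _ ht

variable {F : Finset G}

theorem exists_inv_mul_mem_iff (hFP : {w : G | ∃ a ∈ F, ∃ p ∈ P, w = a * p} = P \ {1}) (w : G) :
    (∃ a ∈ F, a⁻¹ * w ∈ P) ↔ w ∈ P ∧ w ≠ 1 := by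
  have := Set.ext_iff.mp hFP w
  simp only [Set.mem_ofPred_eq, Set.mem_sdiff, Set.mem_singleton_iff] at this
  rw [← this]
  simp [← inv_mul_eq_iff_eq_mul]

theorem principalUpSet_sdiff_biUnion (hone : (1 : G) ∈ P)
    (hFP : {w : G | ∃ a ∈ F, ∃ p ∈ P, w = a * p} = P \ {1}) (x : P) :
    principalUpSet P x \ ⋃ a ∈ F, principalUpSet P (x * a) = {x} := by
  ext t
  simp only [Set.mem_sdiff, Set.mem_iUnion, mem_principalUpSet, mul_inv_rev,
    mul_assoc, exists_prop, exists_inv_mul_mem_iff hFP, Set.mem_singleton_iff]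
  rw [Subtype.ext_iff, eq_comm, ← inv_mul_eq_one]
  by_cases h : (x : G)⁻¹ * t = 1 <;> simp [h, hone]

theorem indicator_singleton_mem_span_indicator_principalUpSet {R : Type*} [CommRing R]
    (hone : (1 : G) ∈ P) (hmul : ∀ a ∈ P, ∀ b ∈ P, a * b ∈ P)
    (hql : HasLeastCommonUpperBounds P) (hF : ↑F ⊆ P)
    (hFP : {w : G | ∃ a ∈ F, ∃ p ∈ P, w = a * p} = P \ {1}) (x : P) :
    ({x} : Set P).indicator (1 : P → R) ∈
      Submodule.span R ((·.indicator 1) '' (principalUpSet P '' P)) := by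
  have hinter : ∀ U ∈ principalUpSet P '' P, ∀ V ∈ principalUpSet P '' P,
      (U ∩ V).Nonempty → U ∩ V ∈ principalUpSet P '' P := by
    rintro _ ⟨y, -, rfl⟩ _ ⟨z, -, rfl⟩
    exact principalUpSet_inter_mem_image hmul hql
  have hsub : ⋃ a ∈ F, principalUpSet P (x * a) ⊆ principalUpSet P x :=
    Set.iUnion₂_subset fun a ha ↦ principalUpSet_mul_subset hmul x (hF ha)
  rw [← principalUpSet_sdiff_biUnion hone hFP, Set.indicator_sdiff hsub]
  exact sub_mem (Submodule.subset_span ⟨_, ⟨x, x.2, rfl⟩, rfl⟩)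
    (indicator_one_biUnion_mem_span hinter F fun a ha ↦ ⟨_, hmul x x.2 a (hF ha), rfl⟩)

theorem image_indicator_principalUpSet {R : Type*} [Semiring R] :
    (·.indicator 1) '' (principalUpSet P '' P) =
      {f : P → R | ∃ s ∈ P, f = fun t : P => if s⁻¹ * (t : G) ∈ P then (1 : R) else 0} := by
  ext f
  simp [funext_iff, Set.indicator_apply, eq_comm]

end QuasiLattice

theorem stmt2_general {G : Type*} [Group G] (P : Set G)
    (hone : (1 : G) ∈ P)
    (hmul : ∀ a ∈ P, ∀ b ∈ P, a * b ∈ P)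
    (hql : ∀ x y : G, (∃ u ∈ P, x⁻¹ * u ∈ P ∧ y⁻¹ * u ∈ P) →
      ∃ v ∈ P, x⁻¹ * v ∈ P ∧ y⁻¹ * v ∈ P ∧
        ∀ u ∈ P, x⁻¹ * u ∈ P → y⁻¹ * u ∈ P → v⁻¹ * u ∈ P)
    (F : Finset G) (hF : ↑F ⊆ P \ {1})
    (hFP : {w : G | ∃ a ∈ F, ∃ p ∈ P, w = a * p} = P \ {1}) :
    (∀ x ∈ P, ∀ ε > (0 : ℝ),
      ∃ g ∈ Submodule.span ℂ
        {f : P → ℂ | ∃ s ∈ P, f = fun t : P => if s⁻¹ * (t : G) ∈ P then (1 : ℂ) else 0},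
        ∀ t : P, ‖(if (t : G) = x then (1 : ℂ) else 0) - g t‖ ≤ ε) ∧
    (∀ f : P → ℂ,
      (∀ ε > (0 : ℝ), ∃ g : P → ℂ, (Function.support g).Finite ∧
        ∀ t : P, ‖f t - g t‖ ≤ ε) →
      ∀ ε > (0 : ℝ),
        ∃ g ∈ Submodule.span ℂ
          {f : P → ℂ | ∃ s ∈ P, f = fun t : P => if s⁻¹ * (t : G) ∈ P then (1 : ℂ) else 0},
          ∀ t : P, ‖f t - g t‖ ≤ ε) := by
  have hsingle := indicator_singleton_mem_span_indicator_principalUpSet (R := ℂ) hone hmul hql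
    (hF.trans Set.sdiff_subset) hFP
  rw [image_indicator_principalUpSet] at hsingle
  refine ⟨fun x hx ε hε ↦ ⟨_, hsingle ⟨x, hx⟩, fun t ↦ ?_⟩, fun f hf ε hε ↦ ?_⟩
  · simpa [Set.indicator_apply, Subtype.ext_iff] using hε.le
  · obtain ⟨g, hg, hfg⟩ := hf ε hε
    exact ⟨g, Submodule.mem_of_support_finite hsingle hg, hfg⟩

/-- If `(G, P)` is quasi-lattice ordered with a FESSPE, then every singleton indicator
`1_{{x}}` (`x ∈ P`) lies in the closed linear span `B_P` of the indicators
`1_s` of the up-sets `{t ∈ P : s ≤ t}` inside `ℓ∞(P)` (closure taken in the sup norm,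
expressed via uniform approximation); consequently `c₀(P) ⊆ B_P`. -/
theorem stmt2 {G : Type*} [Group G] (P : Set G)
    (hone : (1 : G) ∈ P)
    (hmul : ∀ a ∈ P, ∀ b ∈ P, a * b ∈ P)
    (hpos : ∀ a ∈ P, a⁻¹ ∈ P → a = 1)
    (hql : ∀ x y : G, (∃ u ∈ P, x⁻¹ * u ∈ P ∧ y⁻¹ * u ∈ P) →
      ∃ v ∈ P, x⁻¹ * v ∈ P ∧ y⁻¹ * v ∈ P ∧
        ∀ u ∈ P, x⁻¹ * u ∈ P → y⁻¹ * u ∈ P → v⁻¹ * u ∈ P)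
    (F : Finset G) (hF : ↑F ⊆ P \ {1})
    (hFP : {w : G | ∃ a ∈ F, ∃ p ∈ P, w = a * p} = P \ {1}) :
    (∀ x ∈ P, ∀ ε > (0 : ℝ),
      ∃ g ∈ Submodule.span ℂ
        {f : P → ℂ | ∃ s ∈ P, f = fun t : P => if s⁻¹ * (t : G) ∈ P then (1 : ℂ) else 0},
        ∀ t : P, ‖(if (t : G) = x then (1 : ℂ) else 0) - g t‖ ≤ ε) ∧
    (∀ f : P → ℂ,
      (∀ ε > (0 : ℝ), ∃ g : P → ℂ, (Function.support g).Finite ∧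
        ∀ t : P, ‖f t - g t‖ ≤ ε) →
      ∀ ε > (0 : ℝ),
        ∃ g ∈ Submodule.span ℂ
          {f : P → ℂ | ∃ s ∈ P, f = fun t : P => if s⁻¹ * (t : G) ∈ P then (1 : ℂ) else 0},
          ∀ t : P, ‖f t - g t‖ ≤ ε) :=
  stmt2_general P hone hmul hql F hF hFP
end

section
/- Let (G,P) be a quasi-lattice ordered group and let T_s for s ∈ P denote the Toeplitz isometries on ℓ²(P) given by T_s ε_t = ε_{st} on the standard orthonormal basis {ε_t}_{t∈P}. Then each T_s is an isometry, s ↦ T_s is a semigroup homomorphism with T_e = 1, and T satisfies Nica covariance: T_s T_s* T_t T_t* = T_{s∨t} T_{s∨t}* when s ∨ t < ∞, and T_s T_s* T_t T_t* = 0 when s and t have no common upper bound in P. -/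
/-!
Each `T s` maps the Hilbert basis injectively into itself (`ε_t ↦ ε_{st}`), so `T s* T s = 1` and
`T s T s*` is the diagonal projection onto the closed span of `{ε_u : s ≤ u}`. Products of such
diagonal projections are the diagonal projections onto intersections of the index sets, and
`{u | s ≤ u} ∩ {u | t ≤ u}` is `{u | s ∨ t ≤ u}`, or empty when `s` and `t` have no common
upper bound.
-/

open scoped InnerProductSpace
open Function ContinuousLinearMap

namespace HilbertBasis

variable {ι 𝕜 E F : Type*} [RCLike 𝕜] [NormedAddCommGroup E] [InnerProductSpace 𝕜 E]
  [NormedAddCommGroup F] [NormedSpace 𝕜 F] (b : HilbertBasis ι 𝕜 E)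

theorem ext_continuousLinearMap {f g : E →L[𝕜] F} (h : ∀ i, f (b i) = g (b i)) : f = g := by
  refine ext_on (Submodule.dense_iff_topologicalClosure_eq_top.mpr b.dense_span) ?_
  rintro _ ⟨i, rfl⟩
  exact h i

theorem ext_inner {x y : E} (h : ∀ i, ⟪b i, x⟫_𝕜 = ⟪b i, y⟫_𝕜) : x = y :=
  b.repr.injective <| lp.ext <| funext fun i => by
    simp only [b.repr_apply_apply, h]

theorem mul_eq_of_apply_eq_indicator {Q₁ Q₂ Q : E →L[𝕜] E} {A B : Set ι}
    (h₁ : ∀ j, Q₁ (b j) = A.indicator b j) (h₂ : ∀ j, Q₂ (b j) = B.indicator b j)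
    (h : ∀ j, Q (b j) = (A ∩ B).indicator b j) : Q₁ * Q₂ = Q := by
  refine b.ext_continuousLinearMap fun j => ?_
  rw [mul_apply_eq_comp, h₂, h]
  by_cases hi : j ∈ A <;> by_cases hj : j ∈ B <;> simp [hi, hj, h₁]

variable [CompleteSpace E] {f : ι → ι} {T : E →L[𝕜] E} (hT : ∀ i, T (b i) = b (f i))
include hT

theorem adjoint_apply_map (hf : Injective f) (i : ι) : adjoint T (b (f i)) = b i := by
  classical
  refine b.ext_inner fun k => ?_
  rw [adjoint_inner_right, hT, orthonormal_iff_ite.mp b.orthonormal,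
    orthonormal_iff_ite.mp b.orthonormal, hf.eq_iff]

theorem adjoint_apply_of_notMem_range {j : ι} (hj : j ∉ Set.range f) : adjoint T (b j) = 0 := by
  refine b.ext_inner fun k => ?_
  rw [adjoint_inner_right, hT, inner_zero_right,
    b.orthonormal.inner_eq_zero fun h => hj ⟨k, h⟩]

theorem adjoint_mul_self_eq_one (hf : Injective f) : adjoint T * T = 1 :=
  b.ext_continuousLinearMap fun i => by
    rw [mul_apply_eq_comp, hT, b.adjoint_apply_map hT hf, one_apply_eq_self]

theorem mul_adjoint_apply_eq_indicator (hf : Injective f) (j : ι) :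
    (T * adjoint T) (b j) = (Set.range f).indicator b j := by
  by_cases hj : j ∈ Set.range f
  · obtain ⟨i, rfl⟩ := hj
    rw [Set.indicator_of_mem (Set.mem_range_self i), mul_apply_eq_comp,
      b.adjoint_apply_map hT hf, hT]
  · rw [Set.indicator_of_notMem hj, mul_apply_eq_comp,
      b.adjoint_apply_of_notMem_range hT hj, map_zero]

end HilbertBasis

section LeftTranslation

variable {G : Type*} [Group G] {P : Set G} (hmul : ∀ a ∈ P, ∀ b ∈ P, a * b ∈ P)
include hmul

theorem inv_mul_mem_trans {a b c : G} (hab : a⁻¹ * b ∈ P) (hbc : b⁻¹ * c ∈ P) :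
    a⁻¹ * c ∈ P := by
  simpa [mul_assoc] using hmul _ hab _ hbc

theorem injective_mul_left_subtype (s : P) :
    Injective fun t : P => (⟨s * t, hmul _ s.2 _ t.2⟩ : P) :=
  fun _ _ h => Subtype.ext (mul_left_cancel (congrArg Subtype.val h))

theorem range_mul_left_subtype (s : P) :
    Set.range (fun t : P => (⟨s * t, hmul _ s.2 _ t.2⟩ : P)) = {u : P | (s : G)⁻¹ * u ∈ P} := by
  ext u
  constructor
  · rintro ⟨t, rfl⟩
    simp
  · intro h
    exact ⟨⟨_, h⟩, Subtype.ext (mul_inv_cancel_left _ _)⟩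

theorem setOf_inv_mul_mem_inter_eq_of_isLUB {s t v : G} (hsv : s⁻¹ * v ∈ P) (htv : t⁻¹ * v ∈ P)
    (hv : ∀ u ∈ P, s⁻¹ * u ∈ P → t⁻¹ * u ∈ P → v⁻¹ * u ∈ P) :
    {u : P | s⁻¹ * u ∈ P} ∩ {u : P | t⁻¹ * u ∈ P} = {u : P | v⁻¹ * u ∈ P} := by
  ext u
  constructor
  · rintro ⟨hsu, htu⟩
    exact hv u u.2 hsu htu
  · intro hvu
    exact ⟨inv_mul_mem_trans hmul hsv hvu, inv_mul_mem_trans hmul htv hvu⟩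

end LeftTranslation

theorem setOf_inv_mul_mem_inter_eq_empty {G : Type*} [Group G] {P : Set G} {s t : G}
    (h : ¬ ∃ u ∈ P, s⁻¹ * u ∈ P ∧ t⁻¹ * u ∈ P) :
    {u : P | s⁻¹ * u ∈ P} ∩ {u : P | t⁻¹ * u ∈ P} = ∅ :=
  Set.eq_empty_iff_forall_notMem.mpr fun u ⟨hsu, htu⟩ => h ⟨u, u.2, hsu, htu⟩

theorem stmt4_general {G : Type*} [Group G] (P : Set G)
    (hone : (1 : G) ∈ P)
    (hmul : ∀ a ∈ P, ∀ b ∈ P, a * b ∈ P)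
    {H : Type*} [NormedAddCommGroup H] [InnerProductSpace ℂ H] [CompleteSpace H]
    (b : HilbertBasis P ℂ H)
    (T : P → H →L[ℂ] H)
    (hT : ∀ s t : P, T s (b t) = b ⟨(s : G) * (t : G), hmul _ s.2 _ t.2⟩) :
    (∀ s : P, Isometry (T s)) ∧
    T ⟨1, hone⟩ = 1 ∧
    (∀ s t : P, T s * T t = T ⟨(s : G) * (t : G), hmul _ s.2 _ t.2⟩) ∧
    (∀ s t : P,
      (∀ v, (hv : v ∈ P ∧ (s : G)⁻¹ * v ∈ P ∧ (t : G)⁻¹ * v ∈ P ∧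
          ∀ u ∈ P, (s : G)⁻¹ * u ∈ P → (t : G)⁻¹ * u ∈ P → v⁻¹ * u ∈ P) →
        T s * ContinuousLinearMap.adjoint (T s) *
          (T t * ContinuousLinearMap.adjoint (T t)) =
          T ⟨v, hv.1⟩ * ContinuousLinearMap.adjoint (T ⟨v, hv.1⟩)) ∧
      ((¬ ∃ u ∈ P, (s : G)⁻¹ * u ∈ P ∧ (t : G)⁻¹ * u ∈ P) →
        T s * ContinuousLinearMap.adjoint (T s) *
          (T t * ContinuousLinearMap.adjoint (T t)) = 0)) := by
  have hproj (s : P) (u : P) :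
      (T s * adjoint (T s)) (b u) = {u : P | (s : G)⁻¹ * u ∈ P}.indicator b u := by
    rw [b.mul_adjoint_apply_eq_indicator (hT s) (injective_mul_left_subtype hmul s),
      range_mul_left_subtype hmul]
  refine ⟨fun s => ?_, b.ext_continuousLinearMap fun t => ?_,
    fun s t => b.ext_continuousLinearMap fun u => ?_, fun s t => ⟨fun v hv => ?_, fun h => ?_⟩⟩
  · exact (T s).isometry_iff_adjoint_comp_self.mpr
      (b.adjoint_mul_self_eq_one (hT s) (injective_mul_left_subtype hmul s))
  · simp only [hT, one_mul, one_apply_eq_self]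
  · simp only [mul_apply_eq_comp, hT, mul_assoc]
  · refine b.mul_eq_of_apply_eq_indicator (hproj s) (hproj t) fun u => ?_
    rw [hproj, setOf_inv_mul_mem_inter_eq_of_isLUB hmul hv.2.1 hv.2.2.1 hv.2.2.2]
  · refine b.mul_eq_of_apply_eq_indicator (hproj s) (hproj t) fun u => ?_
    rw [setOf_inv_mul_mem_inter_eq_empty h, Set.indicator_empty, zero_apply]

/-- The Toeplitz representation of a quasi-lattice ordered group `(G, P)`:
if `(ε_t)_{t ∈ P}` is a Hilbert basis of `ℓ²(P)` and `T_s` are the bounded operators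
determined by `T_s ε_t = ε_{st}`, then each `T_s` is an isometry, `s ↦ T_s` is a unital
semigroup homomorphism, and `T` is Nica covariant:
`T_s T_s* T_t T_t* = T_{s∨t} T_{s∨t}*` when `s ∨ t < ∞`, and `= 0` otherwise. -/
theorem stmt4 {G : Type*} [Group G] (P : Set G)
    (hone : (1 : G) ∈ P)
    (hmul : ∀ a ∈ P, ∀ b ∈ P, a * b ∈ P)
    (hpos : ∀ a ∈ P, a⁻¹ ∈ P → a = 1)
    (hql : ∀ x y : G, (∃ u ∈ P, x⁻¹ * u ∈ P ∧ y⁻¹ * u ∈ P) →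
      ∃ v ∈ P, x⁻¹ * v ∈ P ∧ y⁻¹ * v ∈ P ∧
        ∀ u ∈ P, x⁻¹ * u ∈ P → y⁻¹ * u ∈ P → v⁻¹ * u ∈ P)
    {H : Type*} [NormedAddCommGroup H] [InnerProductSpace ℂ H] [CompleteSpace H]
    (b : HilbertBasis P ℂ H)
    (T : P → H →L[ℂ] H)
    (hT : ∀ s t : P, T s (b t) = b ⟨(s : G) * (t : G), hmul _ s.2 _ t.2⟩) :
    (∀ s : P, Isometry (T s)) ∧
    T ⟨1, hone⟩ = 1 ∧
    (∀ s t : P, T s * T t = T ⟨(s : G) * (t : G), hmul _ s.2 _ t.2⟩) ∧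
    (∀ s t : P,
      (∀ v, (hv : v ∈ P ∧ (s : G)⁻¹ * v ∈ P ∧ (t : G)⁻¹ * v ∈ P ∧
          ∀ u ∈ P, (s : G)⁻¹ * u ∈ P → (t : G)⁻¹ * u ∈ P → v⁻¹ * u ∈ P) →
        T s * ContinuousLinearMap.adjoint (T s) *
          (T t * ContinuousLinearMap.adjoint (T t)) =
          T ⟨v, hv.1⟩ * ContinuousLinearMap.adjoint (T ⟨v, hv.1⟩)) ∧
      ((¬ ∃ u ∈ P, (s : G)⁻¹ * u ∈ P ∧ (t : G)⁻¹ * u ∈ P) →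
        T s * ContinuousLinearMap.adjoint (T s) *
          (T t * ContinuousLinearMap.adjoint (T t)) = 0)) :=
  stmt4_general P hone hmul b T hT
end

section
/- Let (G,P) be a quasi-lattice ordered group with a FESSPE F, let p, q ∈ P, x = pq⁻¹, and let y ∈ P with xy ∈ P and q ∨ y < ∞. Then x(q ∨ y) = (xy) ∨ p in P, and the Toeplitz operators satisfy T_p T_q* · T_y T_y* = T_{xy}T_{xy}* · T_p T_q*. -/
/-!
The join formula is a translation argument: left multiplication by `x = pq⁻¹` is an order
isomorphism between the elements above `q` and those above `p`, so it carries `q ∨ y` to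
`p ∨ xy`. For the operators, with `ε` the Hilbert basis, both sides send `ε_t` to `ε_{xt}`
when `q ≤ t` and `y ≤ t`, and to `0` otherwise: `T_s T_r*` maps `ε_t` to `ε_{s r⁻¹ t}` or to
`0` according as `r ≤ t` or not, and `xy ≤ xt ↔ y ≤ t`.
-/

section Join

variable {G : Type*} [Group G] {P : Set G}

/-- `v = a ∨ b` for the order `u ≤ w ↔ u⁻¹ * w ∈ P` (with `v ∈ P`). -/
def IsJoin (P : Set G) (a b v : G) : Prop :=
  v ∈ P ∧ a⁻¹ * v ∈ P ∧ b⁻¹ * v ∈ P ∧ ∀ u ∈ P, a⁻¹ * u ∈ P → b⁻¹ * u ∈ P → v⁻¹ * u ∈ P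

theorem IsJoin.symm {a b v : G} (h : IsJoin P a b v) : IsJoin P b a v :=
  ⟨h.1, h.2.2.1, h.2.1, fun u hu hb ha => h.2.2.2 u hu ha hb⟩

theorem IsJoin.mul_left (hmul : ∀ a ∈ P, ∀ b ∈ P, a * b ∈ P) {a b v : G}
    (h : IsJoin P a b v) (z : G) (ha : a ∈ P) (hza : z * a ∈ P) :
    IsJoin P (z * a) (z * b) (z * v) := by
  obtain ⟨-, hav, hbv, hleast⟩ := h
  refine ⟨?_, ?_, ?_, fun u hu hzau hzbu => ?_⟩
  · simpa only [mul_assoc, mul_inv_cancel_left] using hmul _ hza _ hav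
  · simpa only [mul_inv_rev, mul_assoc, inv_mul_cancel_left] using hav
  · simpa only [mul_inv_rev, mul_assoc, inv_mul_cancel_left] using hbv
  · have hzu : z⁻¹ * u ∈ P := by
      simpa only [mul_inv_rev, mul_assoc, mul_inv_cancel_left] using hmul _ ha _ hzau
    have := hleast _ hzu (by simpa only [mul_inv_rev, mul_assoc] using hzau)
      (by simpa only [mul_inv_rev, mul_assoc] using hzbu)
    simpa only [mul_inv_rev, mul_assoc] using this

end Join

theorem HilbertBasis.ext_continuousLinearMap_s18 {ι 𝕜 E F : Type*} [RCLike 𝕜]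
    [NormedAddCommGroup E] [InnerProductSpace 𝕜 E] [NormedAddCommGroup F] [Module 𝕜 F]
    [ContinuousSMul 𝕜 F] (b : HilbertBasis ι 𝕜 E) {A B : E →L[𝕜] F}
    (h : ∀ i, A (b i) = B (b i)) : A = B :=
  ContinuousLinearMap.ext_on (Submodule.dense_iff_topologicalClosure_eq_top.mpr b.dense_span)
    (Set.forall_mem_range.mpr h)

section Toeplitz

variable {G : Type*} {P : Set G} {𝕜 H : Type*} [RCLike 𝕜]
  [NormedAddCommGroup H] [InnerProductSpace 𝕜 H]

open Classical in
noncomputable def basisVector (b : HilbertBasis P 𝕜 H) (g : G) : H :=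
  if h : g ∈ P then b ⟨g, h⟩ else 0

theorem basisVector_of_mem (b : HilbertBasis P 𝕜 H) {g : G} (hg : g ∈ P) :
    basisVector b g = b ⟨g, hg⟩ := by
  simp [basisVector, hg]

theorem basisVector_coe (b : HilbertBasis P 𝕜 H) (t : P) : basisVector b t = b t :=
  basisVector_of_mem b t.2

theorem basisVector_of_notMem (b : HilbertBasis P 𝕜 H) {g : G} (hg : g ∉ P) :
    basisVector b g = 0 := by
  simp [basisVector, hg]

open Classical in
theorem inner_basisVector (b : HilbertBasis P 𝕜 H) (i : P) (g : G) :
    inner 𝕜 (b i) (basisVector b g) = if (i : G) = g then 1 else 0 := by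
  by_cases hg : g ∈ P
  · simp only [basisVector, dif_pos hg, orthonormal_iff_ite.mp b.orthonormal, Subtype.ext_iff]
  · have hi : (i : G) ≠ g := fun h => hg (h ▸ i.2)
    simp [basisVector_of_notMem b hg, hi]

variable [Group G] (hmul : ∀ a ∈ P, ∀ b ∈ P, a * b ∈ P)
  (b : HilbertBasis P 𝕜 H) (T : P → H →L[𝕜] H)
  (hT : ∀ s t : P, T s (b t) = b ⟨(s : G) * (t : G), hmul _ s.2 _ t.2⟩)
include hT

open Classical in
theorem toeplitz_apply_basisVector (s : P) (g : G) :
    T s (basisVector b g) = if g ∈ P then basisVector b (s * g) else 0 := by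
  by_cases hg : g ∈ P
  · rw [if_pos hg, basisVector_of_mem b hg, hT, basisVector_of_mem b (hmul _ s.2 _ hg)]
  · rw [if_neg hg, basisVector_of_notMem b hg, map_zero]

variable [CompleteSpace H]

theorem adjoint_toeplitz_apply_basis (s t : P) :
    (T s).adjoint (b t) = basisVector b ((s : G)⁻¹ * t) := by
  classical
  refine b.repr.injective (lp.ext (funext fun i => ?_))
  simp only [b.repr_apply_apply, ContinuousLinearMap.adjoint_inner_right, hT,
    ← basisVector_coe b t, inner_basisVector]
  exact if_congr eq_inv_mul_iff_mul_eq.symm rfl rfl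

open Classical in
theorem toeplitz_mul_adjoint_apply_basisVector (s r : P) (g : G) :
    (T s * (T r).adjoint) (basisVector b g) =
      if (r : G)⁻¹ * g ∈ P then basisVector b ((s : G) * (r : G)⁻¹ * g) else 0 := by
  by_cases hg : g ∈ P
  · rw [mul_apply_eq_comp, basisVector_of_mem b hg,
      adjoint_toeplitz_apply_basis hmul b T hT, toeplitz_apply_basisVector hmul b T hT, mul_assoc]
  · have hrg : (r : G)⁻¹ * g ∉ P := fun h => hg (by simpa using hmul _ r.2 _ h)
    rw [basisVector_of_notMem b hg, map_zero, if_neg hrg]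

theorem toeplitz_mul_adjoint_mul_projection (s r w z : P) (hz : (z : G) = s * (r : G)⁻¹ * w) :
    T s * (T r).adjoint * (T w * (T w).adjoint) = T z * (T z).adjoint * (T s * (T r).adjoint) := by
  refine b.ext_continuousLinearMap_s18 fun t => ?_
  have hshift : (z : G)⁻¹ * (s * (r : G)⁻¹ * t) = (w : G)⁻¹ * t := by rw [hz]; group
  rw [← basisVector_coe b t, mul_apply_eq_comp (_ * _) (_ * _), mul_apply_eq_comp (_ * _) (_ * _)]
  simp only [toeplitz_mul_adjoint_apply_basisVector hmul b T hT, apply_ite, map_zero,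
    mul_inv_cancel, one_mul]
  rw [hshift]
  split_ifs <;> rfl

end Toeplitz

theorem stmt18_general {G : Type*} [Group G] (P : Set G)
    (hmul : ∀ a ∈ P, ∀ b ∈ P, a * b ∈ P)
    {H : Type*} [NormedAddCommGroup H] [InnerProductSpace ℂ H] [CompleteSpace H]
    (b : HilbertBasis P ℂ H)
    (T : P → H →L[ℂ] H)
    (hT : ∀ s t : P, T s (b t) = b ⟨(s : G) * (t : G), hmul _ s.2 _ t.2⟩)
    (p q y : G) (hp : p ∈ P) (hq : q ∈ P) (hy : y ∈ P)
    (hxy : p * q⁻¹ * y ∈ P)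
    (v : G)
    (hv : v ∈ P ∧ q⁻¹ * v ∈ P ∧ y⁻¹ * v ∈ P ∧
      ∀ u ∈ P, q⁻¹ * u ∈ P → y⁻¹ * u ∈ P → v⁻¹ * u ∈ P) :
    (p * q⁻¹ * v ∈ P ∧ (p * q⁻¹ * y)⁻¹ * (p * q⁻¹ * v) ∈ P ∧
      p⁻¹ * (p * q⁻¹ * v) ∈ P ∧
      ∀ u ∈ P, (p * q⁻¹ * y)⁻¹ * u ∈ P → p⁻¹ * u ∈ P →
        (p * q⁻¹ * v)⁻¹ * u ∈ P) ∧
    T ⟨p, hp⟩ * ContinuousLinearMap.adjoint (T ⟨q, hq⟩) *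
        (T ⟨y, hy⟩ * ContinuousLinearMap.adjoint (T ⟨y, hy⟩)) =
      T ⟨p * q⁻¹ * y, hxy⟩ * ContinuousLinearMap.adjoint (T ⟨p * q⁻¹ * y, hxy⟩) *
        (T ⟨p, hp⟩ * ContinuousLinearMap.adjoint (T ⟨q, hq⟩)) := by
  have hjoin : IsJoin P (p * q⁻¹ * y) p (p * q⁻¹ * v) := by
    simpa only [inv_mul_cancel_right] using
      (IsJoin.mul_left hmul hv (p * q⁻¹) hq (by rwa [inv_mul_cancel_right])).symm
  exact ⟨hjoin, toeplitz_mul_adjoint_mul_projection hmul b T hT _ _ _ _ rfl⟩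

/-- If `(G, P)` has a FESSPE, `p, q ∈ P`, `x = pq⁻¹`, and `y ∈ P` satisfies `xy ∈ P`
and `q ∨ y < ∞`, then `x(q ∨ y) = (xy) ∨ p` in `P`, and the Toeplitz operators
satisfy `T_p T_q* · T_y T_y* = T_{xy} T_{xy}* · T_p T_q*`. -/
theorem stmt18 {G : Type*} [Group G] (P : Set G)
    (hone : (1 : G) ∈ P)
    (hmul : ∀ a ∈ P, ∀ b ∈ P, a * b ∈ P)
    (hpos : ∀ a ∈ P, a⁻¹ ∈ P → a = 1)
    (hql : ∀ x y : G, (∃ u ∈ P, x⁻¹ * u ∈ P ∧ y⁻¹ * u ∈ P) →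
      ∃ v ∈ P, x⁻¹ * v ∈ P ∧ y⁻¹ * v ∈ P ∧
        ∀ u ∈ P, x⁻¹ * u ∈ P → y⁻¹ * u ∈ P → v⁻¹ * u ∈ P)
    (F : Finset G) (hF : ↑F ⊆ P \ {1})
    (hFP : {w : G | ∃ a ∈ F, ∃ p ∈ P, w = a * p} = P \ {1})
    {H : Type*} [NormedAddCommGroup H] [InnerProductSpace ℂ H] [CompleteSpace H]
    (b : HilbertBasis P ℂ H)
    (T : P → H →L[ℂ] H)
    (hT : ∀ s t : P, T s (b t) = b ⟨(s : G) * (t : G), hmul _ s.2 _ t.2⟩)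
    (p q y : G) (hp : p ∈ P) (hq : q ∈ P) (hy : y ∈ P)
    (hxy : p * q⁻¹ * y ∈ P)
    (v : G)
    (hv : v ∈ P ∧ q⁻¹ * v ∈ P ∧ y⁻¹ * v ∈ P ∧
      ∀ u ∈ P, q⁻¹ * u ∈ P → y⁻¹ * u ∈ P → v⁻¹ * u ∈ P) :
    (p * q⁻¹ * v ∈ P ∧ (p * q⁻¹ * y)⁻¹ * (p * q⁻¹ * v) ∈ P ∧
      p⁻¹ * (p * q⁻¹ * v) ∈ P ∧
      ∀ u ∈ P, (p * q⁻¹ * y)⁻¹ * u ∈ P → p⁻¹ * u ∈ P →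
        (p * q⁻¹ * v)⁻¹ * u ∈ P) ∧
    T ⟨p, hp⟩ * ContinuousLinearMap.adjoint (T ⟨q, hq⟩) *
        (T ⟨y, hy⟩ * ContinuousLinearMap.adjoint (T ⟨y, hy⟩)) =
      T ⟨p * q⁻¹ * y, hxy⟩ * ContinuousLinearMap.adjoint (T ⟨p * q⁻¹ * y, hxy⟩) *
        (T ⟨p, hp⟩ * ContinuousLinearMap.adjoint (T ⟨q, hq⟩)) :=
  stmt18_general P hmul b T hT p q y hp hq hy hxy v hv
end
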